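/- Let ρ : G → GL(n, ℂ) be a quasi-primitive faithful representation of a finite group G. Then every normal abelian subgroup A of G is contained in the center Z(G), the center Z(G) is cyclic, and ρ maps Z(G) to scalar matrices. -/

import Mathlib

/-!
If `ρ|_N` is isotypic of type `τ` and `a ∈ N` commutes with all of `N`, Schur's lemma makes
`τ a`, hence `ρ a`, a scalar. Applied to a normal abelian subgroup `A` this makes `ρ(A)` scalar,
so `A` is central because `ρ` is faithful; applied to `Z(G)` it embeds `Z(G)` into `ℂˣ`,
whose finite subgroups are cyclic.
-/

open Module

section Defs

variable {G : Type*} [Group G]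

/-- A representation is irreducible if the module is nontrivial and the only
invariant submodules are `⊥` and `⊤`. -/
def RepIsIrred {V : Type*} [AddCommGroup V] [Module ℂ V]
    (ρ : Representation ℂ G V) : Prop :=
  (⊥ : Submodule ℂ V) ≠ ⊤ ∧
    ∀ W : Submodule ℂ V, (∀ g : G, W.map (ρ g) ≤ W) → W = ⊥ ∨ W = ⊤

/-- `m` copies of the representation `τ`. -/
noncomputable def copiesRep {H : Type*} [Group H] {d : ℕ} (m : ℕ)
    (τ : Representation ℂ H (Fin d → ℂ)) :
    Representation ℂ H (Fin m → Fin d → ℂ) where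
  toFun g := (τ g).compLeft (Fin m)
  map_one' := by
    apply LinearMap.ext; intro f; funext i
    simp [LinearMap.compLeft]
  map_mul' := by
    intro a b
    apply LinearMap.ext; intro f; funext i
    simp [LinearMap.compLeft]; rfl

/-- The restriction of `ρ` to `N` is homogeneous (isotypic): it is isomorphic,
`N`-equivariantly, to a direct sum of copies of a single irreducible
representation of `N`. -/
def RestrictionHomogeneous {n : ℕ} (ρ : Representation ℂ G (Fin n → ℂ))
    (N : Subgroup G) : Prop :=
  ∃ (m d : ℕ) (τ : Representation ℂ ↥N (Fin d → ℂ)), RepIsIrred τ ∧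
    ∃ e : (Fin n → ℂ) ≃ₗ[ℂ] (Fin m → Fin d → ℂ),
      ∀ (g : ↥N) (v : Fin n → ℂ), e (ρ (↑g) v) = copiesRep m τ g (e v)

end Defs

theorem RepIsIrred.nontrivial {G V : Type*} [Group G] [AddCommGroup V] [Module ℂ V]
    {τ : Representation ℂ G V} (hτ : RepIsIrred τ) : Nontrivial V :=
  (Submodule.nontrivial_iff ℂ).mp (nontrivial_of_ne _ _ hτ.1)

/-- An eigenspace of `τ a` is `G`-invariant, hence everything. -/
theorem RepIsIrred.exists_eq_smul_one_of_commute {G V : Type*} [Group G] [AddCommGroup V]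
    [Module ℂ V] [FiniteDimensional ℂ V] {τ : Representation ℂ G V} (hτ : RepIsIrred τ)
    {a : G} (ha : ∀ g, Commute a g) : ∃ c : ℂ, τ a = c • 1 := by
  have := hτ.nontrivial
  obtain ⟨c, hc⟩ := Module.End.exists_eigenvalue (τ a)
  refine ⟨c, ?_⟩
  have hinv : ∀ g, (Module.End.eigenspace (τ a) c).map (τ g) ≤ Module.End.eigenspace (τ a) c :=
    fun g => Submodule.map_le_iff_le_comap.mpr fun v hv =>
      Module.End.mapsTo_genEigenspace_of_comm ((ha g).map τ) c 1 hv
  have htop : Module.End.eigenspace (τ a) c = ⊤ := (hτ.2 _ hinv).resolve_left hc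
  rwa [Module.End.eigenspace_def, LinearMap.ker_eq_top, sub_eq_zero] at htop

theorem copiesRep_eq_smul_one {H : Type*} [Group H] {d : ℕ} (m : ℕ)
    {τ : Representation ℂ H (Fin d → ℂ)} {g : H} {c : ℂ} (hg : τ g = c • 1) :
    copiesRep m τ g = c • 1 := by
  ext f i j
  simp [copiesRep, LinearMap.compLeft, hg]

theorem RestrictionHomogeneous.exists_eq_smul_one {G : Type*} [Group G] {n : ℕ}
    {ρ : Representation ℂ G (Fin n → ℂ)} {N : Subgroup G} (hN : RestrictionHomogeneous ρ N)
    {a : N} (ha : ∀ b : N, Commute a b) : ∃ c : ℂ, ρ a = c • 1 := by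
  obtain ⟨m, d, τ, hτ, e, he⟩ := hN
  obtain ⟨c, hc⟩ := hτ.exists_eq_smul_one_of_commute ha
  refine ⟨c, LinearMap.ext fun v => e.injective ?_⟩
  simp [he, copiesRep_eq_smul_one m hc]

theorem Representation.mem_center_of_eq_smul_one {k G V : Type*} [CommSemiring k] [Group G]
    [AddCommMonoid V] [Module k V] {ρ : Representation k G V} (hρ : Function.Injective ρ)
    {a : G} {c : k} (ha : ρ a = c • 1) : a ∈ Subgroup.center G :=
  Subgroup.mem_center_iff.mpr fun g => hρ <| by
    simp only [map_mul, ha, smul_mul_assoc, mul_smul_comm, one_mul, mul_one]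

theorem isCyclic_of_injective_of_forall_eq_smul_one {k H V : Type*} [Field k] [Group H]
    [Finite H] [AddCommGroup V] [Module k V] [Nontrivial V] {f : H →* Module.End k V}
    (hf : Function.Injective f) (hscalar : ∀ h, ∃ c : k, f h = c • 1) : IsCyclic H := by
  have hmem : ∀ h, f h ∈ (⊥ : Subalgebra k (Module.End k V)).toSubmonoid := fun h => by
    obtain ⟨c, hc⟩ := hscalar h
    exact Algebra.mem_bot.mpr ⟨c, by rw [hc, Algebra.algebraMap_eq_smul_one]⟩
  let toScalar := Algebra.botEquivOfInjective (algebraMap k (Module.End k V)).injective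
  refine isCyclic_of_injective_ringHom
    ((toScalar : (⊥ : Subalgebra k (Module.End k V)) →* k).comp (f.codRestrict _ hmem)) ?_
  exact toScalar.injective.comp fun x y hxy => hf (congrArg Subtype.val hxy)

theorem stmt3 {G : Type*} [Group G] [Finite G] {n : ℕ}
    (ρ : Representation ℂ G (Fin n → ℂ)) (hfaith : Function.Injective ρ)
    (hirr : RepIsIrred ρ)
    (hqp : ∀ N : Subgroup G, N.Normal → RestrictionHomogeneous ρ N) :
    (∀ A : Subgroup G, A.Normal → (∀ a ∈ A, ∀ b ∈ A, a * b = b * a) →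
      A ≤ Subgroup.center G) ∧
    IsCyclic ↥(Subgroup.center G) ∧
    (∀ z ∈ Subgroup.center G, ∃ c : ℂ,
      ρ z = c • (1 : Module.End ℂ (Fin n → ℂ))) := by
  have hscalar : ∀ A : Subgroup G, A.Normal → (∀ a ∈ A, ∀ b ∈ A, a * b = b * a) →
      ∀ a ∈ A, ∃ c : ℂ, ρ a = c • 1 := fun A hA hcomm a ha =>
    (hqp A hA).exists_eq_smul_one (a := ⟨a, ha⟩) fun b => Subtype.ext (hcomm a ha b b.2)
  have hcenter : ∀ z ∈ Subgroup.center G, ∃ c : ℂ, ρ z = c • 1 :=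
    hscalar _ inferInstance fun a ha b _ => (Subgroup.mem_center_iff.mp ha b).symm
  have := hirr.nontrivial
  refine ⟨fun A hA hcomm a ha => ?_, ?_, hcenter⟩
  · obtain ⟨c, hc⟩ := hscalar A hA hcomm a ha
    exact ρ.mem_center_of_eq_smul_one hfaith hc
  · exact isCyclic_of_injective_of_forall_eq_smul_one (f := ρ.comp (Subgroup.center G).subtype)
      (hfaith.comp Subtype.val_injective) fun z => hcenter z z.2
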